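/- arXiv:2110.05441 — 4 statements merged into one kernel-verified Lean document; each statement's English description precedes it below -/
import Mathlib

section
/- Gagliardo–Nirenberg inequality in ℝ³ with exponent 5: there exists a constant C > 0 such that for every continuously differentiable, compactly supported function u : ℝ³ → ℝ one has ‖u‖_{L⁵} ≤ C · ‖u‖_{L²}^{1/10} · ‖∇u‖_{L²}^{9/10}, where all L^p norms are taken with respect to Lebesgue measure on ℝ³ and ‖∇u‖_{L²} denotes the L² norm of the pointwise operator norm of the Fréchet derivative of u. -/
open MeasureTheory
open scoped ENNReal NNReal

open ENNReal in
/-- Interpolation: `‖u‖_5 ≤ ‖u‖_2^(1/10) * ‖u‖_6^(9/10)`. -/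
lemma interp_L5 {α : Type*} [MeasurableSpace α] (μ : Measure α)
    (u : α → ℝ) (hu : AEMeasurable u μ) :
    eLpNorm u 5 μ ≤ eLpNorm u 2 μ ^ ((1:ℝ)/10) * eLpNorm u 6 μ ^ ((9:ℝ)/10) := by
  have hmeas : AEMeasurable (fun x => (‖u x‖₊ : ℝ≥0∞)) μ := hu.enorm
  set B : ℝ≥0∞ := ∫⁻ x, (‖u x‖₊ : ℝ≥0∞) ^ (2:ℝ) ∂μ with hB
  set D : ℝ≥0∞ := ∫⁻ x, (‖u x‖₊ : ℝ≥0∞) ^ (6:ℝ) ∂μ with hD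
  have key : (∫⁻ x, (‖u x‖₊ : ℝ≥0∞) ^ (5:ℝ) ∂μ) ≤ B ^ ((1:ℝ)/4) * D ^ ((3:ℝ)/4) := by
    have hconj : Real.HolderConjugate 4 (4/3) := by
      constructor <;> norm_num
    have := ENNReal.lintegral_mul_le_Lp_mul_Lq μ hconj
      (f := fun x => (‖u x‖₊ : ℝ≥0∞) ^ ((1:ℝ)/2))
      (g := fun x => (‖u x‖₊ : ℝ≥0∞) ^ ((9:ℝ)/2))
      (hmeas.pow_const _) (hmeas.pow_const _)
    calc (∫⁻ x, (‖u x‖₊ : ℝ≥0∞) ^ (5:ℝ) ∂μ)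
        = ∫⁻ x, (‖u x‖₊ : ℝ≥0∞) ^ ((1:ℝ)/2) * (‖u x‖₊ : ℝ≥0∞) ^ ((9:ℝ)/2) ∂μ := by
          congr 1; ext x
          rw [show (5:ℝ) = 1/2 + 9/2 by norm_num,
            ENNReal.rpow_add_of_nonneg _ _ (by norm_num) (by norm_num)]
      _ ≤ (∫⁻ x, ((‖u x‖₊ : ℝ≥0∞) ^ ((1:ℝ)/2)) ^ (4:ℝ) ∂μ) ^ ((1:ℝ)/4)
            * (∫⁻ x, ((‖u x‖₊ : ℝ≥0∞) ^ ((9:ℝ)/2)) ^ ((4:ℝ)/3) ∂μ) ^ ((1:ℝ)/(4/3)) := this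
      _ = B ^ ((1:ℝ)/4) * D ^ ((3:ℝ)/4) := by
          simp_rw [← ENNReal.rpow_mul]
          norm_num [hB, hD]
  have h5 : eLpNorm u 5 μ = (∫⁻ x, (‖u x‖₊ : ℝ≥0∞) ^ (5:ℝ) ∂μ) ^ ((1:ℝ)/5) := by
    rw [eLpNorm_eq_lintegral_rpow_enorm_toReal (by norm_num) (by norm_num)]
    norm_num [enorm_eq_nnnorm]
  have h2 : eLpNorm u 2 μ = B ^ ((1:ℝ)/2) := by
    rw [eLpNorm_eq_lintegral_rpow_enorm_toReal (by norm_num) (by norm_num)]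
    norm_num [hB, enorm_eq_nnnorm]
  have h6 : eLpNorm u 6 μ = D ^ ((1:ℝ)/6) := by
    rw [eLpNorm_eq_lintegral_rpow_enorm_toReal (by norm_num) (by norm_num)]
    norm_num [hD, enorm_eq_nnnorm]
  rw [h5, h2, h6, ← ENNReal.rpow_mul, ← ENNReal.rpow_mul]
  calc (∫⁻ x, (‖u x‖₊ : ℝ≥0∞) ^ (5:ℝ) ∂μ) ^ ((1:ℝ)/5)
      ≤ (B ^ ((1:ℝ)/4) * D ^ ((3:ℝ)/4)) ^ ((1:ℝ)/5) :=
        ENNReal.rpow_le_rpow key (by norm_num)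
    _ = B ^ ((1:ℝ)/2 * (1/10)) * D ^ ((1:ℝ)/6 * (9/10)) := by
        rw [ENNReal.mul_rpow_of_nonneg _ _ (by norm_num), ← ENNReal.rpow_mul,
          ← ENNReal.rpow_mul]
        norm_num

/-- Gagliardo–Nirenberg inequality in ℝ³ with exponent 5. -/
theorem gagliardo_nirenberg_L5 :
    ∃ C : ℝ, 0 < C ∧
      ∀ u : EuclideanSpace ℝ (Fin 3) → ℝ, ContDiff ℝ 1 u → HasCompactSupport u →
        eLpNorm u 5 volume ≤
          ENNReal.ofReal C * eLpNorm u 2 volume ^ ((1 : ℝ) / 10)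
            * eLpNorm (fun x => ‖fderiv ℝ u x‖) 2 volume ^ ((9 : ℝ) / 10) := by
  set C₆ : NNReal := SNormLESNormFDerivOfEqConst (F := ℝ)
    (μ := (volume : Measure (EuclideanSpace ℝ (Fin 3)))) 2 with hC₆
  refine ⟨(C₆ : ℝ) ^ ((9:ℝ)/10) + 1, by positivity, fun u hu h2u => ?_⟩
  have hsob0 := eLpNorm_le_eLpNorm_fderiv_of_eq (u := u) (p := 2) (p' := 6) volume hu h2u
    (by norm_num) (by simp) (by rw [finrank_euclideanSpace_fin]; norm_num)
  have hsob : eLpNorm u 6 volume ≤ C₆ * eLpNorm (fderiv ℝ u) 2 volume := by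
    rw [hC₆]; exact_mod_cast hsob0
  have hinterp := interp_L5 volume u (hu.continuous.measurable.aemeasurable)
  have hnorm : eLpNorm (fun x => ‖fderiv ℝ u x‖) 2 volume
      = eLpNorm (fderiv ℝ u) 2 volume := eLpNorm_norm _
  calc eLpNorm u 5 volume
      ≤ eLpNorm u 2 volume ^ ((1:ℝ)/10) * eLpNorm u 6 volume ^ ((9:ℝ)/10) := hinterp
    _ ≤ eLpNorm u 2 volume ^ ((1:ℝ)/10)
          * ((C₆ : ℝ≥0∞) * eLpNorm (fderiv ℝ u) 2 volume) ^ ((9:ℝ)/10) := by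
        gcongr
    _ = (C₆ : ℝ≥0∞) ^ ((9:ℝ)/10) * eLpNorm u 2 volume ^ ((1:ℝ)/10)
          * eLpNorm (fderiv ℝ u) 2 volume ^ ((9:ℝ)/10) := by
        rw [ENNReal.mul_rpow_of_nonneg _ _ (by norm_num)]; ring
    _ ≤ ENNReal.ofReal ((C₆ : ℝ) ^ ((9:ℝ)/10) + 1) * eLpNorm u 2 volume ^ ((1:ℝ)/10)
          * eLpNorm (fun x => ‖fderiv ℝ u x‖) 2 volume ^ ((9:ℝ)/10) := by
        rw [hnorm]
        gcongr
        rw [← ENNReal.ofReal_coe_nnreal, ENNReal.ofReal_rpow_of_nonneg (by positivity) (by norm_num)]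
        exact ENNReal.ofReal_le_ofReal (by linarith)
end

section
/- Gagliardo–Nirenberg inequality in ℝ³ with exponent 4: there exists a constant C > 0 such that for every continuously differentiable, compactly supported function u : ℝ³ → ℝ one has ‖u‖_{L⁴} ≤ C · ‖u‖_{L²}^{1/4} · ‖∇u‖_{L²}^{3/4}, where all L^p norms are taken with respect to Lebesgue measure on ℝ³ and ‖∇u‖_{L²} denotes the L² norm of the pointwise operator norm of the Fréchet derivative of u. -/
open MeasureTheory

/-- Gagliardo–Nirenberg inequality in ℝ³ with exponent 4. -/
theorem gagliardo_nirenberg_L4 :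
    ∃ C : ℝ, 0 < C ∧
      ∀ u : EuclideanSpace ℝ (Fin 3) → ℝ, ContDiff ℝ 1 u → HasCompactSupport u →
        eLpNorm u 4 volume ≤
          ENNReal.ofReal C * eLpNorm u 2 volume ^ ((1 : ℝ) / 4)
            * eLpNorm (fun x => ‖fderiv ℝ u x‖) 2 volume ^ ((3 : ℝ) / 4) := by
  set μ : Measure (EuclideanSpace ℝ (Fin 3)) := volume
  set K : NNReal := SNormLESNormFDerivOfEqConst (E := EuclideanSpace ℝ (Fin 3)) ℝ μ 2
  refine ⟨(K : ℝ) ^ ((3:ℝ)/4) + 1, by positivity, fun u hu h2u => ?_⟩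
  have hmeas : AEMeasurable (fun x => (‖u x‖₊ : ENNReal)) μ := by
    apply AEMeasurable.coe_nnreal_ennreal; exact (hu.continuous.nnnorm).aemeasurable
  -- Sobolev: L⁶ bound
  have hsob : eLpNorm u ((6:NNReal) : ENNReal) μ ≤
      (K : ENNReal) * eLpNorm (fderiv ℝ u) ((2:NNReal) : ENNReal) μ := by
    apply eLpNorm_le_eLpNorm_fderiv_of_eq μ hu h2u (p := 2) (p' := 6)
    · norm_num
    · simp [finrank_euclideanSpace]
    · rw [finrank_euclideanSpace]
      norm_num
  have h6 : ((6:NNReal) : ENNReal) = (6 : ENNReal) := by norm_num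
  have h2 : ((2:NNReal) : ENNReal) = (2 : ENNReal) := by norm_num
  rw [h6, h2] at hsob
  have hfd : eLpNorm (fderiv ℝ u) 2 μ = eLpNorm (fun x => ‖fderiv ℝ u x‖) 2 μ :=
    (eLpNorm_norm (fderiv ℝ u)).symm
  rw [hfd] at hsob
  set G := eLpNorm (fun x => ‖fderiv ℝ u x‖) 2 μ
  -- Hölder interpolation
  set A := ∫⁻ x, (‖u x‖₊ : ENNReal) ^ (2:ℝ) ∂μ with hA
  set B := ∫⁻ x, (‖u x‖₊ : ENNReal) ^ (6:ℝ) ∂μ with hB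
  have hD : ∫⁻ x, (‖u x‖₊ : ENNReal) ^ (4:ℝ) ∂μ ≤ A ^ ((1:ℝ)/2) * B ^ ((1:ℝ)/2) := by
    have hconj : Real.HolderConjugate 2 2 := by
      constructor <;> norm_num
    have H := ENNReal.lintegral_mul_le_Lp_mul_Lq μ hconj
      (f := fun x => (‖u x‖₊ : ENNReal)) (g := fun x => (‖u x‖₊ : ENNReal) ^ (3:ℝ))
      hmeas (hmeas.pow_const _)
    have e1 : ∀ x : ENNReal, x * x ^ (3:ℝ) = x ^ (4:ℝ) := fun x => by
      nth_rewrite 1 [← ENNReal.rpow_one x]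
      rw [← ENNReal.rpow_add_of_nonneg] <;> norm_num
    have e2 : ∀ x : ENNReal, (x ^ (3:ℝ)) ^ (2:ℝ) = x ^ (6:ℝ) := fun x => by
      rw [← ENNReal.rpow_mul]; norm_num
    simp only [Pi.mul_apply, e1, e2] at H
    convert H using 3
  have h4ne : (4 : ENNReal) ≠ 0 := by norm_num
  have e4 : eLpNorm u 4 μ = (∫⁻ x, (‖u x‖₊ : ENNReal) ^ (4:ℝ) ∂μ) ^ ((1:ℝ)/4) := by
    rw [eLpNorm_eq_lintegral_rpow_enorm_toReal h4ne (by norm_num)]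
    norm_num [enorm_eq_nnnorm]
  have e2' : eLpNorm u 2 μ = A ^ ((1:ℝ)/2) := by
    rw [eLpNorm_eq_lintegral_rpow_enorm_toReal (by norm_num) (by norm_num)]
    norm_num [hA, enorm_eq_nnnorm]
  have e6 : eLpNorm u 6 μ = B ^ ((1:ℝ)/6) := by
    rw [eLpNorm_eq_lintegral_rpow_enorm_toReal (by norm_num) (by norm_num)]
    norm_num [hB, enorm_eq_nnnorm]
  rw [e6] at hsob
  have hKof : (K : ENNReal) ^ ((3:ℝ)/4) ≤ ENNReal.ofReal ((K : ℝ) ^ ((3:ℝ)/4) + 1) := by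
    have : ((K : ENNReal)) ^ ((3:ℝ)/4) = ENNReal.ofReal ((K : ℝ) ^ ((3:ℝ)/4)) := by
      rw [← ENNReal.ofReal_rpow_of_nonneg K.coe_nonneg (by norm_num),
        ENNReal.ofReal_coe_nnreal]
    rw [this]
    exact ENNReal.ofReal_le_ofReal (by linarith [Real.rpow_nonneg (K.coe_nonneg) ((3:ℝ)/4)])
  calc eLpNorm u 4 μ
      = (∫⁻ x, (‖u x‖₊ : ENNReal) ^ (4:ℝ) ∂μ) ^ ((1:ℝ)/4) := e4
    _ ≤ (A ^ ((1:ℝ)/2) * B ^ ((1:ℝ)/2)) ^ ((1:ℝ)/4) :=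
        ENNReal.rpow_le_rpow hD (by norm_num)
    _ = A ^ ((1:ℝ)/8) * B ^ ((1:ℝ)/8) := by
        rw [ENNReal.mul_rpow_of_nonneg _ _ (by norm_num), ← ENNReal.rpow_mul,
          ← ENNReal.rpow_mul]
        norm_num
    _ = A ^ ((1:ℝ)/8) * (B ^ ((1:ℝ)/6)) ^ ((3:ℝ)/4) := by
        rw [← ENNReal.rpow_mul]; norm_num
    _ ≤ A ^ ((1:ℝ)/8) * ((K : ENNReal) * G) ^ ((3:ℝ)/4) := by
        gcongr
    _ = (K : ENNReal) ^ ((3:ℝ)/4) * A ^ ((1:ℝ)/8) * G ^ ((3:ℝ)/4) := by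
        rw [ENNReal.mul_rpow_of_nonneg _ _ (by norm_num)]; ring
    _ ≤ ENNReal.ofReal ((K : ℝ) ^ ((3:ℝ)/4) + 1) * eLpNorm u 2 μ ^ ((1:ℝ)/4)
          * G ^ ((3:ℝ)/4) := by
        rw [e2', ← ENNReal.rpow_mul]
        norm_num
        gcongr
end

section
/- First-order consistency of the backward difference quotient: let E be a real normed vector space, let a < b be real numbers, and let f : ℝ → E be twice continuously differentiable on an open set containing [a,b]. Then ‖(f(b) − f(a))/(b − a) − f'(b)‖ ≤ (b − a)^{1/2} · (∫_a^b ‖f''(t)‖² dt)^{1/2}, where f' and f'' denote the first and second derivatives of f. -/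
open MeasureTheory intervalIntegral Set

/-- First-order consistency of the backward difference quotient. -/
theorem backward_difference_consistency
    {E : Type*} [NormedAddCommGroup E] [NormedSpace ℝ E] [CompleteSpace E]
    (a b : ℝ) (hab : a < b) (f : ℝ → E) (s : Set ℝ)
    (hs : IsOpen s) (hsub : Set.Icc a b ⊆ s) (hf : ContDiffOn ℝ 2 f s) :
    ‖(b - a)⁻¹ • (f b - f a) - deriv f b‖ ≤
      (b - a) ^ ((1 : ℝ) / 2) * (∫ t in a..b, ‖deriv (deriv f) t‖ ^ 2) ^ ((1 : ℝ) / 2) := by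
  have hab' : (0:ℝ) < b - a := sub_pos.2 hab
  set g := deriv (deriv f) with hgdef
  have hmem : ∀ x ∈ Set.Icc a b, x ∈ s := fun x hx => hsub hx
  have hf' : ContDiffOn ℝ 1 (deriv f) s := hf.deriv_of_isOpen hs (by norm_num)
  have h1 : ∀ x ∈ Set.Icc a b, HasDerivAt f (deriv f x) x := fun x hx =>
    ((hf.differentiableOn (by norm_num)).differentiableAt (hs.mem_nhds (hmem x hx))).hasDerivAt
  have h2 : ∀ x ∈ Set.Icc a b, HasDerivAt (deriv f) (g x) x := fun x hx =>
    ((hf'.differentiableOn (by norm_num)).differentiableAt (hs.mem_nhds (hmem x hx))).hasDerivAt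
  have hf'c : ContinuousOn (deriv f) (Set.Icc a b) := hf'.continuousOn.mono hsub
  have hgc : ContinuousOn g (Set.Icc a b) :=
    (hf'.continuousOn_deriv_of_isOpen hs le_rfl).mono hsub
  have huIcc : Set.uIcc a b = Set.Icc a b := Set.uIcc_of_le hab.le
  have hint1 : IntervalIntegrable (deriv f) volume a b :=
    (hf'c.mono huIcc.subset).intervalIntegrable
  have hgcn : ContinuousOn (fun t => (t - a) • g t) (Set.Icc a b) :=
    (continuousOn_id.sub continuousOn_const).smul hgc
  have hint2 : IntervalIntegrable (fun t => (t - a) • g t) volume a b :=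
    (hgcn.mono huIcc.subset).intervalIntegrable
  have hFTC1 : ∫ t in a..b, deriv f t = f b - f a :=
    intervalIntegral.integral_eq_sub_of_hasDerivAt
      (fun x hx => h1 x (by rwa [huIcc] at hx)) hint1
  have hw : ∀ x ∈ Set.uIcc a b,
      HasDerivAt (fun t => (t - a) • deriv f t) ((x - a) • g x + deriv f x) x := by
    intro x hx
    rw [huIcc] at hx
    have := ((hasDerivAt_id x).sub_const a).smul (h2 x hx)
    exact (by simpa using this : HasDerivAt ((fun x => x - a) • deriv f) ((x - a) • g x + deriv f x) x)
  have hFTC2 : ∫ t in a..b, ((t - a) • g t + deriv f t) = (b - a) • deriv f b := by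
    have := intervalIntegral.integral_eq_sub_of_hasDerivAt hw (hint2.add hint1)
    simpa using this
  have key : ∫ t in a..b, (t - a) • g t = (b - a) • deriv f b - (f b - f a) := by
    rw [intervalIntegral.integral_add hint2 hint1, hFTC1] at hFTC2
    exact eq_sub_of_add_eq hFTC2
  have hexp : (b - a)⁻¹ • ((b - a) • deriv f b - (f b - f a))
      = deriv f b - (b - a)⁻¹ • (f b - f a) := by
    rw [smul_sub, smul_smul, inv_mul_cancel₀ hab'.ne', one_smul]
  have hmain : (b - a)⁻¹ • (f b - f a) - deriv f b
      = -((b - a)⁻¹ • ∫ t in a..b, (t - a) • g t) := by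
    rw [key, hexp, neg_sub]
  rw [hmain, norm_neg, norm_smul, norm_inv, Real.norm_of_nonneg hab'.le]
  -- bound the integral
  have hnorm : ‖∫ t in a..b, (t - a) • g t‖ ≤ |∫ t in a..b, (b - a) * ‖g t‖| := by
    refine le_trans ?_ (le_abs_self _)
    apply intervalIntegral.norm_integral_le_of_norm_le hab.le
    · filter_upwards with t ht
      rw [norm_smul, Real.norm_eq_abs, abs_of_nonneg (by linarith [ht.1] : (0:ℝ) ≤ t - a)]
      have h2b := ht.2
      have hgn := norm_nonneg (g t)
      nlinarith [ht.1.le]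
    · exact ((continuousOn_const.mul hgc.norm).mono huIcc.subset).intervalIntegrable
  have hIn : 0 ≤ ∫ t in a..b, ‖g t‖ :=
    intervalIntegral.integral_nonneg hab.le fun t _ => norm_nonneg _
  have habsc : |∫ t in a..b, (b - a) * ‖g t‖| = (b - a) * ∫ t in a..b, ‖g t‖ := by
    rw [intervalIntegral.integral_const_mul, abs_of_nonneg (by positivity)]
  -- Cauchy–Schwarz step
  have hCS : ∫ t in a..b, ‖g t‖ ≤ (b - a) ^ ((1:ℝ)/2) * (∫ t in a..b, ‖g t‖ ^ 2) ^ ((1:ℝ)/2) := by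
    haveI : IsFiniteMeasure (volume.restrict (Set.Ioc a b)) := by
      constructor
      rw [Measure.restrict_apply_univ, Real.volume_Ioc]
      exact ENNReal.ofReal_lt_top
    have hgm : AEStronglyMeasurable (fun t => ‖g t‖) (volume.restrict (Set.Ioc a b)) :=
      ((hgc.mono Set.Ioc_subset_Icc_self).norm).aestronglyMeasurable measurableSet_Ioc
    obtain ⟨C, hC⟩ := isCompact_Icc.exists_bound_of_continuousOn hgc
    have hgℒ : MemLp (fun t => ‖g t‖) (ENNReal.ofReal 2) (volume.restrict (Set.Ioc a b)) := by
      refine MemLp.of_bound hgm C ?_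
      filter_upwards [ae_restrict_mem measurableSet_Ioc] with t ht
      rw [Real.norm_of_nonneg (norm_nonneg _)]
      exact hC t (Set.Ioc_subset_Icc_self ht)
    have hpq : Real.HolderConjugate 2 2 := ⟨by norm_num, by norm_num, by norm_num⟩
    have hCS0 := MeasureTheory.integral_mul_le_Lp_mul_Lq_of_nonneg
      (μ := volume.restrict (Set.Ioc a b)) hpq
      (ae_of_all _ fun t => norm_nonneg (g t))
      (ae_of_all _ fun _ => zero_le_one) hgℒ (memLp_const 1)
    simp only [mul_one, Real.one_rpow] at hCS0
    have hμtot : ∫ _ : ℝ, (1:ℝ) ∂(volume.restrict (Set.Ioc a b)) = b - a := by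
      rw [MeasureTheory.integral_const, smul_eq_mul, mul_one, measureReal_def, Measure.restrict_apply_univ,
        Real.volume_Ioc, ENNReal.toReal_ofReal hab'.le]
    have hpow : ∫ t, ‖g t‖ ^ (2:ℝ) ∂(volume.restrict (Set.Ioc a b))
        = ∫ t, ‖g t‖ ^ (2:ℕ) ∂(volume.restrict (Set.Ioc a b)) :=
      integral_congr_ae (ae_of_all _ fun t => by
        show ‖g t‖ ^ (2:ℝ) = ‖g t‖ ^ (2:ℕ)
        rw [show (2:ℝ) = ((2:ℕ):ℝ) by norm_num, Real.rpow_natCast])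
    rw [hμtot, hpow] at hCS0
    rw [intervalIntegral.integral_of_le hab.le, intervalIntegral.integral_of_le hab.le]
    exact hCS0.trans (le_of_eq (mul_comm _ _))
  calc (b - a)⁻¹ * ‖∫ t in a..b, (t - a) • g t‖
      ≤ (b - a)⁻¹ * ((b - a) * ∫ t in a..b, ‖g t‖) := by
        apply mul_le_mul_of_nonneg_left _ (by positivity)
        rw [← habsc]; exact hnorm
    _ = ∫ t in a..b, ‖g t‖ := by field_simp
    _ ≤ (b - a) ^ ((1:ℝ)/2) * (∫ t in a..b, ‖g t‖ ^ 2) ^ ((1:ℝ)/2) := hCS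
end

section
/- Summed increment estimate on a uniform partition: let E be a real normed vector space, let T > 0, let N be a positive natural number, set Δt = T/N and t_m = m·Δt for m = 0,…,N, and let f : ℝ → E be continuously differentiable on an open set containing [0,T]. Then Δt · ∑_{m=1}^{N} ‖f(t_m) − f(t_{m−1})‖² ≤ (Δt)² · ∫_0^T ‖f'(t)‖² dt. -/
/-!
On each cell `[tₘ₋₁, tₘ]` the fundamental theorem of calculus gives
`‖f tₘ - f tₘ₋₁‖ ≤ ∫ ‖f'‖`, and Cauchy–Schwarz (here Jensen's inequality for `x ↦ x²`)
turns this into `‖f tₘ - f tₘ₋₁‖² ≤ Δt ∫ ‖f'‖²`. Summing over the cells, the integrals add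
up to the integral over `[0, T]`.
-/

open MeasureTheory Set

theorem sq_intervalIntegral_le_mul_intervalIntegral_sq {g : ℝ → ℝ} {a b : ℝ} (hab : a ≤ b)
    (hg : IntervalIntegrable g volume a b)
    (hg2 : IntervalIntegrable (fun t => g t ^ 2) volume a b) :
    (∫ t in a..b, g t) ^ 2 ≤ (b - a) * ∫ t in a..b, g t ^ 2 := by
  rcases hab.eq_or_lt with rfl | hlt
  · simp
  have hlen : volume.real (Ioc a b) = b - a := by simp [hab]
  have jensen := (even_two.convexOn_pow (𝕜 := ℝ)).map_set_average_le
    (continuous_pow 2).continuousOn isClosed_univ (by simp [hlt]) (by simp) (by simp) hg.1 hg2.1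
  simp only [setAverage_eq, hlen, smul_eq_mul] at jensen
  rw [mul_pow, inv_pow, ← div_eq_inv_mul, ← div_eq_inv_mul,
    div_le_div_iff₀ (by positivity) (sub_pos.2 hlt)] at jensen
  rw [intervalIntegral.integral_of_le hab, intervalIntegral.integral_of_le hab]
  nlinarith

theorem norm_sub_sq_le_mul_integral_norm_deriv_sq {E : Type*} [NormedAddCommGroup E]
    [NormedSpace ℝ E] [CompleteSpace E] {f f' : ℝ → E} {a b : ℝ} (hab : a ≤ b)
    (hf : ∀ t ∈ Icc a b, HasDerivAt f (f' t) t) (hf' : ContinuousOn f' (Icc a b)) :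
    ‖f b - f a‖ ^ 2 ≤ (b - a) * ∫ t in a..b, ‖f' t‖ ^ 2 := by
  have hftc : ∫ t in a..b, f' t = f b - f a :=
    intervalIntegral.integral_eq_sub_of_hasDerivAt (by rwa [uIcc_of_le hab])
      (hf'.intervalIntegrable_of_Icc hab)
  calc ‖f b - f a‖ ^ 2 ≤ (∫ t in a..b, ‖f' t‖) ^ 2 := by
        rw [← hftc]
        gcongr
        exact intervalIntegral.norm_integral_le_integral_norm hab
    _ ≤ (b - a) * ∫ t in a..b, ‖f' t‖ ^ 2 :=
        sq_intervalIntegral_le_mul_intervalIntegral_sq hab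
          (hf'.norm.intervalIntegrable_of_Icc hab) ((hf'.norm.pow 2).intervalIntegrable_of_Icc hab)

theorem ContDiffOn.norm_sub_sq_le_mul_integral_norm_deriv_sq {E : Type*} [NormedAddCommGroup E]
    [NormedSpace ℝ E] [CompleteSpace E] {f : ℝ → E} {s : Set ℝ} (hf : ContDiffOn ℝ 1 f s)
    (hs : IsOpen s) {a b : ℝ} (hab : a ≤ b) (hsub : Icc a b ⊆ s) :
    ‖f b - f a‖ ^ 2 ≤ (b - a) * ∫ t in a..b, ‖deriv f t‖ ^ 2 :=
  _root_.norm_sub_sq_le_mul_integral_norm_deriv_sq hab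
    (fun t ht => ((hf.differentiableOn one_ne_zero t (hsub ht)).differentiableAt
      (hs.mem_nhds (hsub ht))).hasDerivAt)
    ((hf.continuousOn_deriv_of_isOpen hs le_rfl).mono hsub)

theorem sum_integral_uniform_cells {E : Type*} [NormedAddCommGroup E] [NormedSpace ℝ E]
    {g : ℝ → E} {Δ : ℝ} (hΔ : 0 ≤ Δ) {N : ℕ} (hg : IntervalIntegrable g volume 0 (N * Δ)) :
    ∑ m ∈ Finset.Icc 1 N, ∫ t in ((m : ℝ) - 1) * Δ..m * Δ, g t = ∫ t in 0..N * Δ, g t := by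
  induction N with
  | zero => simp
  | succ N ih =>
    have hmid : (N : ℝ) * Δ ∈ uIcc 0 ((N + 1 : ℕ) * Δ) := by
      rw [uIcc_of_le (by positivity)]
      exact ⟨by positivity, by gcongr; simp⟩
    have hlo := hg.mono_set (uIcc_subset_uIcc left_mem_uIcc hmid)
    have hhi := hg.mono_set (uIcc_subset_uIcc hmid right_mem_uIcc)
    rw [Nat.cast_add_one] at hhi
    rw [Finset.sum_Icc_succ_top (by omega), ih hlo, Nat.cast_add_one, add_sub_cancel_right,
      intervalIntegral.integral_add_adjacent_intervals hlo hhi]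

theorem Icc_uniform_cell_subset {Δ : ℝ} (hΔ : 0 ≤ Δ) {m N : ℕ} (h1m : 1 ≤ m) (hmN : m ≤ N) :
    Icc (((m : ℝ) - 1) * Δ) (m * Δ) ⊆ Icc 0 (N * Δ) :=
  Icc_subset_Icc (mul_nonneg (sub_nonneg.2 (by exact_mod_cast h1m)) hΔ)
    (by gcongr)

/-- Summed increment estimate on a uniform partition. -/
theorem summed_increment_estimate
    {E : Type*} [NormedAddCommGroup E] [NormedSpace ℝ E] [CompleteSpace E]
    (T : ℝ) (hT : 0 < T) (N : ℕ) (hN : 0 < N) (f : ℝ → E) (s : Set ℝ)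
    (hs : IsOpen s) (hsub : Set.Icc 0 T ⊆ s) (hf : ContDiffOn ℝ 1 f s) :
    (T / N) * ∑ m ∈ Finset.Icc 1 N, ‖f (m * (T / N)) - f (((m : ℝ) - 1) * (T / N))‖ ^ 2 ≤
      (T / N) ^ 2 * ∫ t in (0 : ℝ)..T, ‖deriv f t‖ ^ 2 := by
  set Δ := T / N
  have hΔ : 0 ≤ Δ := by positivity
  have hNΔ : (N : ℝ) * Δ = T := mul_div_cancel₀ T (Nat.cast_ne_zero.2 hN.ne')
  have hcell : ∀ m ∈ Finset.Icc 1 N, ‖f (m * Δ) - f (((m : ℝ) - 1) * Δ)‖ ^ 2 ≤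
      Δ * ∫ t in ((m : ℝ) - 1) * Δ..m * Δ, ‖deriv f t‖ ^ 2 := by
    intro m hm
    rw [Finset.mem_Icc] at hm
    have hms : Icc (((m : ℝ) - 1) * Δ) (m * Δ) ⊆ s :=
      (Icc_uniform_cell_subset hΔ hm.1 hm.2).trans (hNΔ ▸ hsub)
    have := hf.norm_sub_sq_le_mul_integral_norm_deriv_sq hs (by nlinarith) hms
    rwa [show (m : ℝ) * Δ - ((m : ℝ) - 1) * Δ = Δ by ring] at this
  have hint : IntervalIntegrable (fun t => ‖deriv f t‖ ^ 2) volume 0 (N * Δ) := by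
    rw [hNΔ]
    have hcont := (hf.continuousOn_deriv_of_isOpen hs le_rfl).mono hsub
    exact (hcont.norm.pow 2).intervalIntegrable_of_Icc hT.le
  calc Δ * ∑ m ∈ Finset.Icc 1 N, ‖f (m * Δ) - f (((m : ℝ) - 1) * Δ)‖ ^ 2
      ≤ Δ * ∑ m ∈ Finset.Icc 1 N, Δ * ∫ t in ((m : ℝ) - 1) * Δ..m * Δ, ‖deriv f t‖ ^ 2 := by
        gcongr with m hm
        exact hcell m hm
    _ = Δ ^ 2 * ∫ t in (0 : ℝ)..T, ‖deriv f t‖ ^ 2 := by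
        rw [← Finset.mul_sum, sum_integral_uniform_cells hΔ hint, hNΔ]
        ring
end
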